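/- Let X be a nonempty compact subset of ℝ^p with diameter d_X = sup_{x₁,x₂ ∈ X} ‖x₁ − x₂‖, let f₀ : ℝ^p → ℝ be convex and differentiable, and let A₁, …, A_K be nonempty subsets of X whose union is X. Suppose there are affine functions with intercepts α₁, …, α_K ∈ ℝ and slopes β₁, …, β_K ∈ ℝ^p, and an ε ≥ 0, such that for every k ∈ {1, …, K} and every x ∈ A_k one has |α_k + ⟨β_k, x⟩ − f₀(x)| ≤ ε and ‖β_k − ∇f₀(x)‖ ≤ ε. Then for every x ∈ X, |max_{k ∈ {1,…,K}} (α_k + ⟨β_k, x⟩) − f₀(x)| ≤ (1 + d_X) ε. -/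

import Mathlib

/-!
A convex differentiable function lies above each of its tangent planes. A fitted plane `k` is,
at a point `y ∈ A k`, within `ε` of `f₀` in value and within `ε` of the tangent slope, so on `X`
it exceeds the tangent plane at `y` by at most `ε + ε ‖x - y‖ ≤ (1 + diam X) ε`; this bounds the
maximum from above. From below, `x` lies in some `A j`, and plane `j` alone is within `ε` of
`f₀ x`.
-/

open scoped RealInnerProductSpace

theorem ConvexOn.add_fderiv_sub_le {E : Type*} [NormedAddCommGroup E] [NormedSpace ℝ E]
    {f : E → ℝ} {f' : E →L[ℝ] ℝ} {y : E} (hf : ConvexOn ℝ Set.univ f)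
    (hf' : HasFDerivAt f f' y) (x : E) : f y + f' (x - y) ≤ f x := by
  set ℓ : ℝ →ᵃ[ℝ] E := AffineMap.lineMap y x
  have hline : ConvexOn ℝ Set.univ (f ∘ ℓ) := by simpa using hf.comp_affineMap ℓ
  have hderiv : HasDerivAt (f ∘ ℓ) (f' (x - y)) 0 := by
    have hℓ0 : ℓ 0 = y := AffineMap.lineMap_apply_zero y x
    exact (hℓ0 ▸ hf').comp_hasDerivAt 0 AffineMap.hasDerivAt_lineMap
  have hslope := hline.deriv_le_slope (Set.mem_univ 0) (Set.mem_univ 1) one_pos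
    hderiv.differentiableAt
  rw [hderiv.deriv, slope_def_field] at hslope
  simp only [ℓ, Function.comp_apply, AffineMap.lineMap_apply_one,
    AffineMap.lineMap_apply_zero, sub_zero, div_one] at hslope
  linarith

section InnerProductSpace

variable {E : Type*} [NormedAddCommGroup E] [InnerProductSpace ℝ E] [CompleteSpace E]
  {f : E → ℝ} {g y : E}

theorem ConvexOn.add_inner_gradient_sub_le (hf : ConvexOn ℝ Set.univ f)
    (hg : HasGradientAt f g y) (x : E) : f y + ⟪g, x - y⟫ ≤ f x := by
  simpa using hf.add_fderiv_sub_le hg.hasFDerivAt x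

theorem ConvexOn.affine_le_add_of_near_tangent (hf : ConvexOn ℝ Set.univ f)
    (hg : HasGradientAt f g y) {a ε δ : ℝ} {b : E} (hval : a + ⟪b, y⟫ - f y ≤ ε)
    (hslope : ‖b - g‖ ≤ δ) (x : E) : a + ⟪b, x⟫ ≤ f x + ε + δ * ‖x - y‖ := by
  have hsplit : ⟪b, x⟫ = ⟪b, y⟫ + ⟪g, x - y⟫ + ⟪b - g, x - y⟫ := by
    simp only [inner_sub_left, inner_sub_right]; ring
  have herr : ⟪b - g, x - y⟫ ≤ δ * ‖x - y‖ :=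
    (real_inner_le_norm _ _).trans (by gcongr)
  have htangent := hf.add_inner_gradient_sub_le hg x
  linarith

end InnerProductSpace

theorem cap_uniform_error_bound_general {p : ℕ}
    (X : Set (EuclideanSpace ℝ (Fin p))) (hXc : IsCompact X)
    (f₀ : EuclideanSpace ℝ (Fin p) → ℝ)
    (hconv : ConvexOn ℝ Set.univ f₀) (hdiff : Differentiable ℝ f₀)
    (K : ℕ) (hK : 0 < K)
    (A : Fin K → Set (EuclideanSpace ℝ (Fin p)))
    (hAne : ∀ k, (A k).Nonempty)
    (hcover : (⋃ k, A k) = X)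
    (α : Fin K → ℝ) (β : Fin K → EuclideanSpace ℝ (Fin p))
    (ε : ℝ) (hε : 0 ≤ ε)
    (hval : ∀ k, ∀ x ∈ A k, |α k + ⟪β k, x⟫ - f₀ x| ≤ ε)
    (hgrad : ∀ k, ∀ x ∈ A k, ‖β k - gradient f₀ x‖ ≤ ε) :
    ∀ x ∈ X,
      |Finset.univ.sup' ⟨⟨0, hK⟩, Finset.mem_univ _⟩ (fun k => α k + ⟪β k, x⟫) - f₀ x|
        ≤ (1 + Metric.diam X) * ε := by
  intro x hx
  rw [abs_sub_le_iff]
  constructor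
  · refine sub_le_iff_le_add.mpr (Finset.sup'_le _ _ fun k _ => ?_)
    obtain ⟨y, hy⟩ := hAne k
    have hyX : y ∈ X := hcover ▸ Set.mem_iUnion_of_mem k hy
    have hdist : ‖x - y‖ ≤ Metric.diam X := by
      rw [← dist_eq_norm]
      exact Metric.dist_le_diam_of_mem hXc.isBounded hx hyX
    have := hconv.affine_le_add_of_near_tangent (hdiff y).hasGradientAt
      (abs_le.mp (hval k y hy)).2 (hgrad k y hy) x
    nlinarith
  · obtain ⟨j, hj⟩ := Set.mem_iUnion.mp (hcover.symm ▸ hx)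
    have hmax := Finset.le_sup' (fun k => α k + ⟪β k, x⟫) (Finset.mem_univ j)
    have hvalj := (abs_le.mp (hval j x hj)).1
    nlinarith [Metric.diam_nonneg (s := X)]

/-- The deterministic core of Theorem 2: piecewise value- and gradient-accuracy of
locally fitted hyperplanes on a cover of a compact set `X` transfers to a uniform
error bound for the max-of-hyperplanes estimator. -/
theorem cap_uniform_error_bound {p : ℕ}
    (X : Set (EuclideanSpace ℝ (Fin p))) (hXne : X.Nonempty) (hXc : IsCompact X)
    (f₀ : EuclideanSpace ℝ (Fin p) → ℝ)
    (hconv : ConvexOn ℝ Set.univ f₀) (hdiff : Differentiable ℝ f₀)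
    (K : ℕ) (hK : 0 < K)
    (A : Fin K → Set (EuclideanSpace ℝ (Fin p)))
    (hAne : ∀ k, (A k).Nonempty) (hAX : ∀ k, A k ⊆ X)
    (hcover : (⋃ k, A k) = X)
    (α : Fin K → ℝ) (β : Fin K → EuclideanSpace ℝ (Fin p))
    (ε : ℝ) (hε : 0 ≤ ε)
    (hval : ∀ k, ∀ x ∈ A k, |α k + ⟪β k, x⟫ - f₀ x| ≤ ε)
    (hgrad : ∀ k, ∀ x ∈ A k, ‖β k - gradient f₀ x‖ ≤ ε) :
    ∀ x ∈ X,
      |Finset.univ.sup' ⟨⟨0, hK⟩, Finset.mem_univ _⟩ (fun k => α k + ⟪β k, x⟫) - f₀ x|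
        ≤ (1 + Metric.diam X) * ε :=
  cap_uniform_error_bound_general X hXc f₀ hconv hdiff K hK A hAne hcover α β ε hε hval hgrad
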